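/- For any x ∈ ℝ^N that is nonzero and block k-sparse, and any q ∈ (1,∞), if β_{q,3^{q/(q-1)}k}(A) > 0 then x is the unique solution of the problem: minimize ‖z‖_{2,1}/‖z‖_{2,q} subject to Az = Ax. -/

import Mathlib

noncomputable section

/-- The mixed ℓ2/ℓ1 norm of a block-partitioned vector. -/
def norm21 {M d : ℕ} (z : Fin M → EuclideanSpace ℝ (Fin d)) : ℝ := ∑ j, ‖z j‖

/-- The mixed ℓ2/ℓq norm of a block-partitioned vector. -/
def norm2q {M d : ℕ} (q : ℝ) (z : Fin M → EuclideanSpace ℝ (Fin d)) : ℝ :=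
  (∑ j, ‖z j‖ ^ q) ^ (1 / q)

/-- The mixed ℓ2/ℓ∞ norm of a block-partitioned vector. -/
def norm2inf {M d : ℕ} (z : Fin M → EuclideanSpace ℝ (Fin d)) : ℝ := ⨆ j, ‖z j‖

/-- The block q-ratio sparsity. -/
def kqs {M d : ℕ} (q : ℝ) (z : Fin M → EuclideanSpace ℝ (Fin d)) : ℝ :=
  (norm21 z / norm2q q z) ^ (q / (q - 1))

/-- The block support of a block-partitioned vector. -/
def blockSupport {M d : ℕ} (z : Fin M → EuclideanSpace ℝ (Fin d)) : Finset (Fin M) :=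
  letI := Classical.decPred fun j : Fin M => z j ≠ 0
  Finset.univ.filter fun j => z j ≠ 0

/-- Restriction of a block-partitioned vector to a set of blocks. -/
def restrictS {M d : ℕ} (S : Finset (Fin M)) (z : Fin M → EuclideanSpace ℝ (Fin d)) :
    Fin M → EuclideanSpace ℝ (Fin d) := fun j => if j ∈ S then z j else 0

/-- Matrix action on a block-partitioned vector. -/
def mulB {m M d : ℕ} (A : Matrix (Fin m) (Fin M × Fin d) ℝ)
    (x : Fin M → EuclideanSpace ℝ (Fin d)) : EuclideanSpace ℝ (Fin m) :=
  WithLp.toLp 2 (fun i => ∑ p : Fin M × Fin d, A i p * x p.1 p.2)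

/-- Transpose matrix action, producing a block-partitioned vector. -/
def mulBt {m M d : ℕ} (A : Matrix (Fin m) (Fin M × Fin d) ℝ)
    (w : EuclideanSpace ℝ (Fin m)) : Fin M → EuclideanSpace ℝ (Fin d) :=
  fun j => WithLp.toLp 2 (fun l => ∑ i, A i (j, l) * w i)

/-- The q-ratio block constrained minimal singular value (BCMSV). -/
def bcmsv {m M d : ℕ} (q s : ℝ) (A : Matrix (Fin m) (Fin M × Fin d) ℝ) : ℝ :=
  sInf {t : ℝ | ∃ z : Fin M → EuclideanSpace ℝ (Fin d),
    z ≠ 0 ∧ kqs q z ≤ s ∧ t = ‖mulB A z‖ / norm2q q z}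

end

section Aux
variable {M d : ℕ} {q : ℝ}

lemma norm21_nonneg (w : Fin M → EuclideanSpace ℝ (Fin d)) : 0 ≤ norm21 w :=
  Finset.sum_nonneg fun j _ => norm_nonneg _

lemma norm2q_nonneg (q : ℝ) (w : Fin M → EuclideanSpace ℝ (Fin d)) : 0 ≤ norm2q q w :=
  Real.rpow_nonneg (Finset.sum_nonneg fun j _ => Real.rpow_nonneg (norm_nonneg _) _) _

lemma norm2q_pos (hq : 0 < q) {w : Fin M → EuclideanSpace ℝ (Fin d)} (hw : w ≠ 0) :
    0 < norm2q q w := by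
  obtain ⟨j, hj⟩ : ∃ j, w j ≠ 0 := by
    by_contra h; push_neg at h; exact hw (funext h)
  apply Real.rpow_pos_of_pos
  apply Finset.sum_pos' (fun i _ => Real.rpow_nonneg (norm_nonneg _) _)
  exact ⟨j, Finset.mem_univ j, Real.rpow_pos_of_pos (norm_pos_iff.mpr hj) q⟩

lemma mem_blockSupport {w : Fin M → EuclideanSpace ℝ (Fin d)} {j : Fin M} :
    j ∈ blockSupport w ↔ w j ≠ 0 := by
  simp [blockSupport]

/-- Hölder bound: sum of block norms over `S` is at most `card^(1-1/q) * norm2q`. -/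
lemma holder_aux (hq : 1 < q) (S : Finset (Fin M)) (w : Fin M → EuclideanSpace ℝ (Fin d)) :
    ∑ j ∈ S, ‖w j‖ ≤ (S.card : ℝ) ^ (1 - 1/q) * norm2q q w := by
  have hq0 : (0:ℝ) < q := lt_trans one_pos hq
  have hpq : (q / (q - 1)).HolderConjugate q := (Real.HolderConjugate.conjExponent hq).symm
  have h1 := Real.inner_le_Lp_mul_Lq S (fun _ => (1:ℝ)) (fun j => ‖w j‖) hpq
  simp only [one_mul, abs_one, Real.one_rpow, Finset.sum_const, nsmul_eq_mul, mul_one] at h1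
  have he : 1 / (q / (q - 1)) = 1 - 1/q := by field_simp
  rw [he] at h1
  refine le_trans h1 ?_
  apply mul_le_mul_of_nonneg_left _ (Real.rpow_nonneg (Nat.cast_nonneg _) _)
  rw [norm2q]
  apply Real.rpow_le_rpow (Finset.sum_nonneg fun j _ => Real.rpow_nonneg (abs_nonneg _) _)
    _ (by positivity)
  calc ∑ j ∈ S, |‖w j‖| ^ q = ∑ j ∈ S, ‖w j‖ ^ q := by
        simp [abs_of_nonneg (norm_nonneg _)]
    _ ≤ ∑ j, ‖w j‖ ^ q := Finset.sum_le_sum_of_subset_of_nonneg (Finset.subset_univ S)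
        (fun j _ _ => Real.rpow_nonneg (norm_nonneg _) _)

/-- Minkowski-type bound for the block q-norm. -/
lemma norm2q_le_add (hq : 1 ≤ q) (z x h : Fin M → EuclideanSpace ℝ (Fin d))
    (hzxh : ∀ j, ‖z j‖ ≤ ‖x j‖ + ‖h j‖) :
    norm2q q z ≤ norm2q q x + norm2q q h := by
  have hq0 : (0:ℝ) < q := lt_of_lt_of_le one_pos hq
  have key := Real.Lp_add_le Finset.univ (fun j => ‖x j‖) (fun j => ‖h j‖) hq
  simp only [abs_norm] at key
  have hL : norm2q q z ≤ (∑ j, |‖x j‖ + ‖h j‖| ^ q) ^ (1 / q) := by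
    rw [norm2q]
    apply Real.rpow_le_rpow (Finset.sum_nonneg fun j _ => Real.rpow_nonneg (norm_nonneg _) _)
      _ (by positivity)
    apply Finset.sum_le_sum
    intro j _
    exact Real.rpow_le_rpow (norm_nonneg _) ((hzxh j).trans (le_abs_self _)) hq0.le
  rw [norm2q, norm2q]
  exact hL.trans key

end Aux

/-- positivity of the q-ratio BCMSV implies exact recovery of block
k-sparse signals by the noiseless ℓ_{2,1}/ℓ_{2,q} minimization. -/
theorem exact_recovery_of_bcmsv_pos {m M d k : ℕ}
    (A : Matrix (Fin m) (Fin M × Fin d) ℝ)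
    (x : Fin M → EuclideanSpace ℝ (Fin d)) (hx : x ≠ 0)
    (hxs : (blockSupport x).card ≤ k) (q : ℝ) (hq : 1 < q)
    (hbeta : 0 < bcmsv q ((3 : ℝ) ^ (q / (q - 1)) * (k : ℝ)) A) :
    ∀ z : Fin M → EuclideanSpace ℝ (Fin d), mulB A z = mulB A x → z ≠ x →
      norm21 x / norm2q q x < norm21 z / norm2q q z := by
  intro z hAz hzx
  by_contra hcon
  push_neg at hcon
  have hq0 : (0:ℝ) < q := lt_trans one_pos hq
  have hq1 : (0:ℝ) < q - 1 := sub_pos.mpr hq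
  have hq' : (0:ℝ) < q / (q - 1) := div_pos hq0 hq1
  set h : Fin M → EuclideanSpace ℝ (Fin d) := fun j => z j - x j with hh
  have hh0 : h ≠ 0 := by
    intro he
    apply hzx
    funext j
    have := congrFun he j
    simpa [hh, sub_eq_zero] using this
  have hNx : 0 < norm2q q x := norm2q_pos hq0 hx
  have hNh : 0 < norm2q q h := norm2q_pos hq0 hh0
  set S := blockSupport x with hS
  set K : ℝ := (k:ℝ) ^ (1 - 1/q) with hKdef
  have hexp : (0:ℝ) ≤ 1 - 1/q := by
    rw [sub_nonneg]
    rw [div_le_one hq0]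
    linarith
  have hKnn : 0 ≤ K := Real.rpow_nonneg (Nat.cast_nonneg _) _
  -- norm21 x equals the sum over its block support
  have hx21 : norm21 x = ∑ j ∈ S, ‖x j‖ := by
    rw [norm21]
    symm
    apply Finset.sum_subset (Finset.subset_univ S)
    intro j _ hj
    have : x j = 0 := by
      by_contra hxj
      exact hj (mem_blockSupport.mpr hxj)
    simp [this]
  -- the ratio of x is at most K
  have hK : norm21 x / norm2q q x ≤ K := by
    rw [div_le_iff₀ hNx]
    calc norm21 x = ∑ j ∈ S, ‖x j‖ := hx21
      _ ≤ (S.card : ℝ) ^ (1 - 1/q) * norm2q q x := holder_aux hq S x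
      _ ≤ K * norm2q q x := by
          apply mul_le_mul_of_nonneg_right _ hNx.le
          exact Real.rpow_le_rpow (Nat.cast_nonneg _) (Nat.cast_le.mpr hxs) hexp
  -- z satisfies the objective bound
  have hz1 : norm21 z ≤ (norm21 x / norm2q q x) * norm2q q z := by
    by_cases hz0 : z = 0
    · subst hz0
      have h1 : norm21 (0 : Fin M → EuclideanSpace ℝ (Fin d)) = 0 := by
        simp [norm21]
      have h2 : norm2q q (0 : Fin M → EuclideanSpace ℝ (Fin d)) = 0 := by
        simp [norm2q, Real.zero_rpow hq0.ne', Real.zero_rpow (inv_ne_zero hq0.ne')]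
      rw [h1, h2, mul_zero]
    · exact (div_le_iff₀ (norm2q_pos hq0 hz0)).mp hcon
  -- Minkowski
  have hM : norm2q q z ≤ norm2q q x + norm2q q h := by
    apply norm2q_le_add hq.le
    intro j
    have hzj : z j = x j + h j := by simp [hh]
    rw [hzj]
    exact norm_add_le _ _
  have hz2 : norm21 z ≤ norm21 x + (norm21 x / norm2q q x) * norm2q q h := by
    have h1 := hz1.trans (mul_le_mul_of_nonneg_left hM
      (div_nonneg (norm21_nonneg x) hNx.le))
    rw [mul_add, div_mul_cancel₀ _ hNx.ne'] at h1
    exact h1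
  set a := ∑ j ∈ S, ‖h j‖ with hadef
  set b := ∑ j ∈ Sᶜ, ‖h j‖ with hbdef
  -- lower bound on norm21 z
  have hlow : norm21 x - a + b ≤ norm21 z := by
    have hzsplit : norm21 z = ∑ j ∈ S, ‖z j‖ + ∑ j ∈ Sᶜ, ‖z j‖ :=
      (Finset.sum_add_sum_compl S _).symm
    rw [hzsplit]
    apply add_le_add
    · rw [hx21, hadef, ← Finset.sum_sub_distrib]
      apply Finset.sum_le_sum
      intro j _
      have hxj : x j = z j - h j := by simp [hh]
      have : ‖x j‖ ≤ ‖z j‖ + ‖h j‖ := by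
        rw [hxj]; exact norm_sub_le _ _
      linarith
    · apply le_of_eq
      apply Finset.sum_congr rfl
      intro j hj
      have hxj : x j = 0 := by
        by_contra hxj
        exact (Finset.mem_compl.mp hj) (mem_blockSupport.mpr hxj)
      simp [hh, hxj]
  have ha : a ≤ K * norm2q q h := by
    calc a ≤ (S.card : ℝ) ^ (1 - 1/q) * norm2q q h := holder_aux hq S h
      _ ≤ K * norm2q q h := by
          apply mul_le_mul_of_nonneg_right _ hNh.le
          exact Real.rpow_le_rpow (Nat.cast_nonneg _) (Nat.cast_le.mpr hxs) hexp
  have hrh : (norm21 x / norm2q q x) * norm2q q h ≤ K * norm2q q h :=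
    mul_le_mul_of_nonneg_right hK hNh.le
  have hn21h : norm21 h = a + b := (Finset.sum_add_sum_compl S _).symm
  have key : norm21 h ≤ 3 * K * norm2q q h := by
    nlinarith [hlow, hz2, ha, hrh, hn21h]
  -- bound on the q-ratio sparsity of h
  have hkqs : kqs q h ≤ (3:ℝ) ^ (q / (q - 1)) * (k:ℝ) := by
    rw [kqs]
    have h3K : norm21 h / norm2q q h ≤ 3 * K := (div_le_iff₀ hNh).mpr key
    have hnn : 0 ≤ norm21 h / norm2q q h := div_nonneg (norm21_nonneg h) hNh.le
    calc (norm21 h / norm2q q h) ^ (q / (q - 1))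
        ≤ (3 * K) ^ (q / (q - 1)) := Real.rpow_le_rpow hnn h3K hq'.le
      _ = (3:ℝ) ^ (q / (q - 1)) * K ^ (q / (q - 1)) :=
          Real.mul_rpow (by norm_num) hKnn
      _ = (3:ℝ) ^ (q / (q - 1)) * (k:ℝ) := by
          congr 1
          rw [hKdef, ← Real.rpow_mul (Nat.cast_nonneg k)]
          have : (1 - 1/q) * (q / (q - 1)) = 1 := by
            field_simp
          rw [this, Real.rpow_one]
  -- A h = 0
  have hAh : mulB A h = 0 := by
    ext i
    have hzx' : ∑ p : Fin M × Fin d, A i p * z p.1 p.2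
        = ∑ p : Fin M × Fin d, A i p * x p.1 p.2 := congrArg (fun v => v i) hAz
    show ∑ p : Fin M × Fin d, A i p * h p.1 p.2 = 0
    calc ∑ p : Fin M × Fin d, A i p * h p.1 p.2
        = ∑ p : Fin M × Fin d, (A i p * z p.1 p.2 - A i p * x p.1 p.2) := by
          apply Finset.sum_congr rfl
          intro p _
          have : h p.1 p.2 = z p.1 p.2 - x p.1 p.2 := rfl
          rw [this, mul_sub]
      _ = 0 := by rw [Finset.sum_sub_distrib, hzx', sub_self]
  -- contradiction with positivity of the BCMSV
  have hmem : (0:ℝ) ∈ {t : ℝ | ∃ w : Fin M → EuclideanSpace ℝ (Fin d),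
      w ≠ 0 ∧ kqs q w ≤ (3:ℝ) ^ (q / (q - 1)) * (k:ℝ) ∧ t = ‖mulB A w‖ / norm2q q w} := by
    refine ⟨h, hh0, hkqs, ?_⟩
    rw [hAh]
    simp
  have hbdd : BddBelow {t : ℝ | ∃ w : Fin M → EuclideanSpace ℝ (Fin d),
      w ≠ 0 ∧ kqs q w ≤ (3:ℝ) ^ (q / (q - 1)) * (k:ℝ) ∧ t = ‖mulB A w‖ / norm2q q w} := by
    refine ⟨0, fun t ht => ?_⟩
    obtain ⟨w, _, _, rfl⟩ := ht
    exact div_nonneg (norm_nonneg _) (norm2q_nonneg q w)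
  have hle := csInf_le hbdd hmem
  rw [bcmsv] at hbeta
  linarith
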